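/- Let n ≥ 3 and let A₁ ≥ A₂ ≥ … ≥ Aₙ > 0 be real numbers with A₁ < A₂ + … + Aₙ. Then there exist a real number R > 0 and real numbers β₁, …, βₙ with 0 < βᵢ < 2π for all i, β₁ + β₂ + … + βₙ = 2π, and Aᵢ = 2 R sin(βᵢ / 2) for all i. -/

import Mathlib

/-!
Shrinking the circle corresponds to increasing `t = 1 / (2R)` from `0`; the half central angle of
a side `aᵢ` is then `arcsin (aᵢ t)`, defined up to `t = 1 / M` with `M = a i₀` the longest side.
If at `t = 1 / M` these half-angles already sum to at least `π`, the intermediate value theorem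
gives a `t` where they sum to exactly `π`. Otherwise the centre ends up outside the polygon, the
longest side has half-angle `π - arcsin (M t)`, and we need
`∑_{i ≠ i₀} arcsin (aᵢ t) = arcsin (M t)`: the difference of the two sides is negative at
`t = 1 / M` and, having derivative `∑_{i ≠ i₀} aᵢ - M > 0` at `0`, positive for small `t`.
-/

open Real Finset Topology

section

variable {ι : Type*}

def IsCyclicPolygon [Fintype ι] (a : ι → ℝ) (R : ℝ) (β : ι → ℝ) : Prop :=
  0 < R ∧ (∀ i, 0 < β i ∧ β i < 2 * π) ∧ ∑ i, β i = 2 * π ∧ ∀ i, a i = 2 * R * sin (β i / 2)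

theorem isCyclicPolygon_of_half_angles [Fintype ι] {a γ : ι → ℝ} {t : ℝ} (ht : 0 < t)
    (hγ : ∀ i, 0 < γ i ∧ γ i < π) (hsum : ∑ i, γ i = π) (hsin : ∀ i, sin (γ i) = a i * t) :
    IsCyclicPolygon a (1 / (2 * t)) (fun i => 2 * γ i) := by
  refine ⟨by positivity, fun i => ⟨by linarith [hγ i], by linarith [hγ i]⟩, ?_, fun i => ?_⟩
  · rw [← mul_sum, hsum]
  · rw [mul_div_cancel_left₀ _ two_ne_zero, hsin]
    field_simp

theorem hasDerivAt_arcsin_mul_zero (c : ℝ) : HasDerivAt (fun t => arcsin (c * t)) c 0 := by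
  have harcsin : HasDerivAt arcsin 1 (c * id 0) := by
    simpa using hasDerivAt_arcsin (x := 0) (by norm_num) (by norm_num)
  simpa [Function.comp_def] using harcsin.comp 0 ((hasDerivAt_id 0).const_mul c)

theorem exists_sum_arcsin_mul_eq_pi [Fintype ι] (a : ι → ℝ) {T : ℝ} (hT : 0 ≤ T)
    (h : π ≤ ∑ i, arcsin (a i * T)) : ∃ t ∈ Set.Ioc 0 T, ∑ i, arcsin (a i * t) = π := by
  have hcont : Continuous fun t => ∑ i, arcsin (a i * t) := by fun_prop
  obtain ⟨t, ht, hπ⟩ := intermediate_value_Icc hT hcont.continuousOn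
    ⟨by simp [pi_nonneg], h⟩
  refine ⟨t, ⟨lt_of_le_of_ne ht.1 ?_, ht.2⟩, hπ⟩
  rintro rfl
  simp [pi_ne_zero.symm] at hπ

theorem eventually_arcsin_mul_lt_sum_arcsin_mul (a : ι → ℝ) (s : Finset ι) {c : ℝ}
    (hc : c < ∑ i ∈ s, a i) :
    ∀ᶠ t in 𝓝[>] 0, arcsin (c * t) < ∑ i ∈ s, arcsin (a i * t) := by
  have hderiv : HasDerivAt (fun t => ∑ i ∈ s, arcsin (a i * t) - arcsin (c * t))
      (∑ i ∈ s, a i - c) 0 :=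
    (HasDerivAt.fun_sum fun i _ => hasDerivAt_arcsin_mul_zero (a i)).sub
      (hasDerivAt_arcsin_mul_zero c)
  filter_upwards [hderiv.tendsto_slope_zero_right.eventually (eventually_gt_nhds (sub_pos.2 hc)),
    self_mem_nhdsWithin] with t hslope (ht : 0 < t)
  simp only [zero_add, mul_zero, arcsin_zero, sum_const_zero, sub_zero, smul_eq_mul] at hslope
  linarith [pos_of_mul_pos_right hslope (inv_pos.2 ht).le]

theorem exists_sum_arcsin_mul_eq_arcsin_mul (a : ι → ℝ) (s : Finset ι) {c T : ℝ} (hT : 0 < T)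
    (hc : c < ∑ i ∈ s, a i) (h : ∑ i ∈ s, arcsin (a i * T) < arcsin (c * T)) :
    ∃ t ∈ Set.Ioc 0 T, ∑ i ∈ s, arcsin (a i * t) = arcsin (c * t) := by
  obtain ⟨t₀, ht₀, ht₀T⟩ := ((eventually_arcsin_mul_lt_sum_arcsin_mul a s hc).and
    (Ioo_mem_nhdsGT hT)).exists
  have hcont : Continuous fun t => ∑ i ∈ s, arcsin (a i * t) - arcsin (c * t) := by fun_prop
  obtain ⟨t, ht, hzero⟩ := intermediate_value_Icc' ht₀T.2.le hcont.continuousOn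
    (show (0 : ℝ) ∈ Set.Icc _ _ from ⟨by linarith, by linarith⟩)
  exact ⟨t, ⟨ht₀T.1.trans_le ht.1, ht.2⟩, sub_eq_zero.1 hzero⟩

theorem exists_isCyclicPolygon [Fintype ι] [DecidableEq ι] {a : ι → ℝ} (hpos : ∀ i, 0 < a i)
    {i₀ : ι} (hmax : ∀ i, a i ≤ a i₀) (hlt : a i₀ < ∑ i ∈ univ.erase i₀, a i) :
    ∃ R β, IsCyclicPolygon a R β := by
  set M := a i₀
  have hM : 0 < M := hpos i₀
  have hunit : ∀ t ∈ Set.Ioc 0 M⁻¹, ∀ i, a i * t ∈ Set.Ioc 0 1 := fun t ht i =>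
    ⟨mul_pos (hpos i) ht.1, calc
      a i * t ≤ M * M⁻¹ := mul_le_mul (hmax i) ht.2 ht.1.le hM.le
      _ = 1 := mul_inv_cancel₀ hM.ne'⟩
  have hsin : ∀ t ∈ Set.Ioc 0 M⁻¹, ∀ i, sin (arcsin (a i * t)) = a i * t := fun t ht i =>
    sin_arcsin (by linarith [(hunit t ht i).1]) (hunit t ht i).2
  have harcsin : ∀ t ∈ Set.Ioc 0 M⁻¹, ∀ i, 0 < arcsin (a i * t) ∧ arcsin (a i * t) < π :=
    fun t ht i => ⟨arcsin_pos.2 (hunit t ht i).1,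
      (arcsin_le_pi_div_two _).trans_lt (half_lt_self pi_pos)⟩
  by_cases hin : π ≤ ∑ i, arcsin (a i * M⁻¹)
  · obtain ⟨t, ht, hsum⟩ := exists_sum_arcsin_mul_eq_pi a (inv_nonneg.2 hM.le) hin
    exact ⟨_, _, isCyclicPolygon_of_half_angles ht.1 (harcsin t ht) hsum (hsin t ht)⟩
  · have hout : ∑ i ∈ univ.erase i₀, arcsin (a i * M⁻¹) < arcsin (M * M⁻¹) := by
      have hsplit := add_sum_erase _ (fun i => arcsin (a i * M⁻¹)) (mem_univ i₀)
      rw [mul_inv_cancel₀ hM.ne', arcsin_one] at hsplit ⊢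
      linarith
    obtain ⟨t, ht, hsum⟩ := exists_sum_arcsin_mul_eq_arcsin_mul a _ (inv_pos.2 hM) hlt hout
    have hγ₀ := harcsin t ht i₀
    refine ⟨_, _, isCyclicPolygon_of_half_angles
      (γ := Function.update (fun i => arcsin (a i * t)) i₀ (π - arcsin (M * t))) ht.1 ?_ ?_ ?_⟩
    · exact Function.forall_update_iff _ (p := fun _ γ => 0 < γ ∧ γ < π) |>.2
        ⟨⟨by linarith, by linarith⟩, fun i _ => harcsin t ht i⟩
    · rw [sum_update_of_mem (mem_univ i₀), ← erase_eq, hsum, sub_add_cancel]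
    · exact Function.forall_update_iff _ (p := fun i γ => sin γ = a i * t) |>.2
        ⟨by rw [sin_pi_sub, hsin t ht], fun i _ => hsin t ht i⟩

end

/-- **Existence of a cyclic polygon.**  Given `n ≥ 3` reals `A₁ ≥ ⋯ ≥ Aₙ > 0`
with `A₁ < A₂ + ⋯ + Aₙ`, there is a radius `R > 0` and central angles
`β₁, …, βₙ ∈ (0, 2π)` summing to `2π` with `Aᵢ = 2 R sin(βᵢ/2)` (the chord
length formula). -/
theorem exists_cyclic_polygon (n : ℕ) (hn : 3 ≤ n) (A : Fin n → ℝ)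
    (hpos : ∀ i, 0 < A i) (hsorted : Antitone A)
    (hlt : A ⟨0, by omega⟩ < ∑ i ∈ Finset.univ.erase ⟨0, by omega⟩, A i) :
    ∃ R : ℝ, 0 < R ∧ ∃ β : Fin n → ℝ,
      (∀ i, 0 < β i ∧ β i < 2 * π) ∧
      (∑ i, β i) = 2 * π ∧
      (∀ i, A i = 2 * R * Real.sin (β i / 2)) := by
  obtain ⟨R, β, hR, hβ, hsum, hchord⟩ :=
    exists_isCyclicPolygon hpos (fun i => hsorted (Nat.zero_le i.val)) hlt
  exact ⟨R, hR, β, hβ, hsum, hchord⟩
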